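/- arXiv:2509.15509 — 3 statements merged into one kernel-verified Lean document; each statement's English description precedes it below -/
import Mathlib

section
/- Let G : ℝ^d → ℝ be differentiable with L-Lipschitz gradient, let g, ĝ ∈ ℝ^d, let x ∈ ℝ^d with g = ∇G(x), and let x' minimize over y ∈ ℝ^d the quantity ⟨ĝ, y − x⟩ + L‖y − x‖², i.e. x' = x − ĝ/(2L). Then G(x') ≤ G(x) − (1/(6L))‖∇G(x)‖² + (1/L)‖∇G(x) − ĝ‖². -/
open InnerProductSpace

local notation "⟪" a ", " b "⟫" => @inner ℝ _ _ a b

/-- Descent lemma: `G y ≤ G x + ⟪∇G x, y - x⟫ + L/2 ‖y - x‖²`. -/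
lemma descent_lemma {E : Type*} [NormedAddCommGroup E] [InnerProductSpace ℝ E]
    [CompleteSpace E] (G : E → ℝ) (L : ℝ) (hL : 0 < L)
    (hdiff : ∀ x, DifferentiableAt ℝ G x)
    (hlip : ∀ x y, ‖gradient G x - gradient G y‖ ≤ L * ‖x - y‖)
    (x y : E) :
    G y ≤ G x + ⟪gradient G x, y - x⟫ + L / 2 * ‖y - x‖ ^ 2 := by
  set v := y - x with hv
  have hc : ∀ t : ℝ, HasDerivAt (fun t : ℝ => x + t • v) v t := fun t => by
    simpa using ((hasDerivAt_id t).smul_const v).const_add x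
  have hf : ∀ t : ℝ, HasDerivAt (fun t : ℝ => G (x + t • v))
      ⟪gradient G (x + t • v), v⟫ t := by
    intro t
    have := ((hdiff (x + t • v)).hasGradientAt.hasFDerivAt).comp_hasDerivAt t (hc t)
    simpa [InnerProductSpace.toDual_apply_apply, Function.comp_def] using this
  set ψ : ℝ → ℝ := fun t => L / 2 * t ^ 2 * ‖v‖ ^ 2 + t * ⟪gradient G x, v⟫ - G (x + t • v)
    with hψdef
  have hψ : ∀ t : ℝ, HasDerivAt ψ
      (L * t * ‖v‖ ^ 2 + ⟪gradient G x, v⟫ - ⟪gradient G (x + t • v), v⟫) t := by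
    intro t
    have h1 : HasDerivAt (fun t : ℝ => L / 2 * t ^ 2 * ‖v‖ ^ 2) (L * t * ‖v‖ ^ 2) t := by
      have := ((hasDerivAt_pow 2 t).const_mul (L / 2)).mul_const (‖v‖ ^ 2)
      exact this.congr_deriv (by ring)
    have h2 : HasDerivAt (fun t : ℝ => t * ⟪gradient G x, v⟫) ⟪gradient G x, v⟫ t := by
      simpa using (hasDerivAt_id t).mul_const ⟪gradient G x, v⟫
    exact (h1.add h2).sub (hf t)
  have key : ψ 0 ≤ ψ 1 := by
    have hderiv_nonneg : ∀ t ∈ Set.Ioo (0:ℝ) 1, 0 ≤ deriv ψ t := by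
      intro t ht
      rw [(hψ t).deriv]
      have h1 : ⟪gradient G (x + t • v) - gradient G x, v⟫ ≤ L * t * ‖v‖ ^ 2 := by
        calc ⟪gradient G (x + t • v) - gradient G x, v⟫
            ≤ ‖gradient G (x + t • v) - gradient G x‖ * ‖v‖ := real_inner_le_norm _ _
          _ ≤ (L * ‖(x + t • v) - x‖) * ‖v‖ := by
              gcongr
              exact hlip _ _
          _ = L * t * ‖v‖ ^ 2 := by
              have : ‖(x + t • v) - x‖ = t * ‖v‖ := by
                simp [norm_smul, abs_of_nonneg ht.1.le]
              rw [this]; ring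
      have h2 : ⟪gradient G (x + t • v), v⟫ - ⟪gradient G x, v⟫
          = ⟪gradient G (x + t • v) - gradient G x, v⟫ := by
        rw [inner_sub_left]
      linarith [h1, h2.symm.le, h2.le]
    have hmono : MonotoneOn ψ (Set.Icc (0:ℝ) 1) := by
      apply monotoneOn_of_deriv_nonneg (convex_Icc 0 1)
      · exact fun t _ => (hψ t).continuousAt.continuousWithinAt
      · intro t ht
        rw [interior_Icc] at ht
        exact ((hψ t).differentiableAt).differentiableWithinAt
      · intro t ht
        rw [interior_Icc] at ht
        exact hderiv_nonneg t ht
    exact hmono (Set.left_mem_Icc.2 zero_le_one) (Set.right_mem_Icc.2 zero_le_one) zero_le_one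
  have h0 : ψ 0 = -G x := by simp [hψdef]
  have h1 : ψ 1 = L / 2 * ‖v‖ ^ 2 + ⟪gradient G x, v⟫ - G y := by
    simp [hψdef, hv]
  rw [h0, h1] at key
  linarith

/-- One inexact gradient step. For `G` differentiable with
`L`-Lipschitz gradient (`L > 0`), an arbitrary gradient estimate `ĝ` at `x`,
and `x' = x − ĝ/(2L)`, one has
`G x' ≤ G x − (1/(6L))‖∇G x‖² + (1/L)‖∇G x − ĝ‖²`. -/
theorem inexact_gradient_step {d : ℕ} (G : EuclideanSpace ℝ (Fin d) → ℝ) (L : ℝ)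
    (hL : 0 < L)
    (hdiff : ∀ x, DifferentiableAt ℝ G x)
    (hlip : ∀ x y, ‖gradient G x - gradient G y‖ ≤ L * ‖x - y‖)
    (x ghat : EuclideanSpace ℝ (Fin d))
    (x' : EuclideanSpace ℝ (Fin d)) (hx' : x' = x - (1 / (2 * L)) • ghat) :
    G x' ≤ G x - (1 / (6 * L)) * ‖gradient G x‖ ^ 2
        + (1 / L) * ‖gradient G x - ghat‖ ^ 2 := by
  have hdesc := descent_lemma G L hL hdiff hlip x x'
  set g := gradient G x with hg
  have hsub : x' - x = -(1 / (2 * L)) • ghat := by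
    rw [hx']; module
  have hip : ⟪g, x' - x⟫ = -(1 / (2 * L)) * ⟪g, ghat⟫ := by
    rw [hsub, real_inner_smul_right]
  have hnorm : ‖x' - x‖ ^ 2 = (1 / (2 * L)) ^ 2 * ‖ghat‖ ^ 2 := by
    rw [hsub, norm_smul, mul_pow, Real.norm_eq_abs, sq_abs]
    ring
  rw [hip, hnorm] at hdesc
  have hCS : ⟪g, ghat⟫ ≤ ‖g‖ * ‖ghat‖ := real_inner_le_norm _ _
  have hexp : ‖g - ghat‖ ^ 2 = ‖g‖ ^ 2 - 2 * ⟪g, ghat⟫ + ‖ghat‖ ^ 2 := by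
    rw [norm_sub_sq_real]
  set a := ‖g‖; set b := ‖ghat‖; set p := ⟪g, ghat⟫ with hp
  have key : 36 * p ≤ 20 * a ^ 2 + 21 * b ^ 2 := by
    nlinarith [sq_nonneg (10 * a - 9 * b), sq_nonneg b, hCS]
  have hnn : 0 ≤ (1 / (24 * L)) * (20 * a ^ 2 + 21 * b ^ 2 - 36 * p) :=
    mul_nonneg (by positivity) (by linarith)
  have heq : G x - (1 / (6 * L)) * a ^ 2 + (1 / L) * (a ^ 2 - 2 * p + b ^ 2)
      - (G x + -(1 / (2 * L)) * p + L / 2 * ((1 / (2 * L)) ^ 2 * b ^ 2))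
      = (1 / (24 * L)) * (20 * a ^ 2 + 21 * b ^ 2 - 36 * p) := by
    field_simp
    ring
  rw [hexp]
  linarith [hdesc, heq, hnn]
end

section
/- Fix β ∈ (0,1) and a probability space (Θ, μ). Define the CVaR envelope 𝒰_β = {ξ : Θ → ℝ measurable : ∫ ξ dμ = 1, 0 ≤ ξ(θ) ≤ 1/(1−β) μ-a.e.}. Let Z : Θ → ℝ be bounded measurable and suppose v ∈ ℝ satisfies μ{Z ≥ v} = 1 − β. Then ξ*(θ) = (1/(1−β))·1_{Z(θ) ≥ v} belongs to 𝒰_β and achieves the supremum: ∫ Z ξ* dμ = sup_{ξ ∈ 𝒰_β} ∫ Z ξ dμ. -/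
/-!
Where `Z ≥ v` the density `ξ*` takes the largest admissible value `1/(1−β)`, and where `Z < v`
the smallest one, `0`; hence `(Z − v) ξ ≤ (Z − v) ξ*` pointwise for every `ξ ∈ 𝒰_β`.
Integrating, and using `∫ ξ = 1 = ∫ ξ*` (the latter is the quantile condition
`μ{Z ≥ v} = 1 − β`), the terms in `v` cancel and `∫ Z ξ ≤ ∫ Z ξ*`.
-/

open MeasureTheory

/-- The CVaR risk envelope at level `β`: densities bounded by `1/(1−β)`. -/
def cvarEnvelope {Θ : Type*} [MeasurableSpace Θ] (μ : Measure Θ) (β : ℝ) :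
    Set (Θ → ℝ) :=
  {ξ | Measurable ξ ∧ (∫ θ, ξ θ ∂μ) = 1 ∧
    (∀ᵐ θ ∂μ, 0 ≤ ξ θ ∧ ξ θ ≤ 1 / (1 - β))}

lemma sub_mul_le_sub_mul_ite {z v x c : ℝ} (hx₀ : 0 ≤ x) (hxc : x ≤ c) :
    (z - v) * x ≤ (z - v) * (if v ≤ z then c else 0) := by
  split_ifs with h
  · exact mul_le_mul_of_nonneg_left hxc (sub_nonneg.2 h)
  · rw [mul_zero]
    exact mul_nonpos_of_nonpos_of_nonneg (by linarith [not_le.1 h]) hx₀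

section

variable {Θ : Type*} [MeasurableSpace Θ] {μ : Measure Θ}

theorem integral_mul_le_of_sub_mul_le {Z ξ η : Θ → ℝ} (v : ℝ) (hξ : Integrable ξ μ)
    (hη : Integrable η μ) (hZξ : Integrable (fun θ => Z θ * ξ θ) μ)
    (hZη : Integrable (fun θ => Z θ * η θ) μ) (hmass : ∫ θ, ξ θ ∂μ = ∫ θ, η θ ∂μ)
    (h : ∀ᵐ θ ∂μ, (Z θ - v) * ξ θ ≤ (Z θ - v) * η θ) :
    ∫ θ, Z θ * ξ θ ∂μ ≤ ∫ θ, Z θ * η θ ∂μ := by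
  have shift : ∀ f : Θ → ℝ, Integrable f μ → Integrable (fun θ => Z θ * f θ) μ →
      Integrable (fun θ => (Z θ - v) * f θ) μ ∧
        ∫ θ, (Z θ - v) * f θ ∂μ = ∫ θ, Z θ * f θ ∂μ - v * ∫ θ, f θ ∂μ := by
    intro f hf hZf
    simp_rw [sub_mul]
    exact ⟨hZf.sub (hf.const_mul v),
      by rw [integral_sub hZf (hf.const_mul v), integral_const_mul]⟩
  obtain ⟨hξv, hξeq⟩ := shift ξ hξ hZξ
  obtain ⟨hηv, hηeq⟩ := shift η hη hZη
  have hle := integral_mono_ae hξv hηv h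
  rw [hξeq, hηeq, hmass] at hle
  linarith

variable {β : ℝ} {ξ : Θ → ℝ}

lemma integrable_of_mem_cvarEnvelope [IsFiniteMeasure μ] (hξ : ξ ∈ cvarEnvelope μ β) :
    Integrable ξ μ :=
  .of_bound hξ.1.aestronglyMeasurable (1 / (1 - β)) <| by
    filter_upwards [hξ.2.2] with θ hθ
    rw [Real.norm_of_nonneg hθ.1]
    exact hθ.2

lemma integrable_mul_of_mem_cvarEnvelope [IsFiniteMeasure μ] {Z : Θ → ℝ} {M : ℝ}
    (hZm : Measurable Z) (hZb : ∀ θ, |Z θ| ≤ M) (hξ : ξ ∈ cvarEnvelope μ β) :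
    Integrable (fun θ => Z θ * ξ θ) μ :=
  (integrable_of_mem_cvarEnvelope hξ).bdd_mul hZm.aestronglyMeasurable
    (.of_forall fun θ => (Real.norm_eq_abs _).trans_le (hZb θ))

lemma ite_mem_cvarEnvelope {Z : Θ → ℝ} {v : ℝ} (hβ : β < 1) (hZm : Measurable Z)
    (hv : μ {θ | v ≤ Z θ} = ENNReal.ofReal (1 - β)) :
    (fun θ => if v ≤ Z θ then 1 / (1 - β) else 0) ∈ cvarEnvelope μ β := by
  have hc : 0 ≤ 1 / (1 - β) := one_div_nonneg.2 (by linarith)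
  have hA : MeasurableSet {θ | v ≤ Z θ} := measurableSet_le measurable_const hZm
  refine ⟨Measurable.ite hA measurable_const measurable_const, ?_,
    .of_forall fun θ => ?_⟩
  · change ∫ θ, {θ | v ≤ Z θ}.indicator (fun _ => 1 / (1 - β)) θ ∂μ = 1
    rw [integral_indicator_const _ hA, measureReal_def, hv,
      ENNReal.toReal_ofReal (by linarith), smul_eq_mul]
    field_simp [show 1 - β ≠ 0 by linarith]
  · dsimp only
    split_ifs
    exacts [⟨hc, le_rfl⟩, ⟨le_rfl, hc⟩]

end

/-- For `β ∈ (0,1)`, a bounded measurable `Z` and `v` with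
`μ{Z ≥ v} = 1 − β`, the density `ξ* = (1/(1−β))·1_{Z ≥ v}` belongs to the CVaR
envelope and attains the supremum `sup_{ξ ∈ 𝒰_β} ∫ Z ξ dμ`. -/
theorem cvar_optimal_density {Θ : Type*} [MeasurableSpace Θ]
    (μ : Measure Θ) [IsProbabilityMeasure μ]
    (β : ℝ) (hβ : β ∈ Set.Ioo (0 : ℝ) 1)
    (Z : Θ → ℝ) (hZm : Measurable Z) (M : ℝ) (hZb : ∀ θ, |Z θ| ≤ M)
    (v : ℝ) (hv : μ {θ | v ≤ Z θ} = ENNReal.ofReal (1 - β)) :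
    (fun θ => if v ≤ Z θ then 1 / (1 - β) else 0) ∈ cvarEnvelope μ β ∧
    (∫ θ, Z θ * (if v ≤ Z θ then 1 / (1 - β) else 0) ∂μ)
      = sSup ((fun ξ => ∫ θ, Z θ * ξ θ ∂μ) '' cvarEnvelope μ β) := by
  have hopt := ite_mem_cvarEnvelope hβ.2 hZm hv
  refine ⟨hopt, (IsGreatest.csSup_eq
    ⟨Set.mem_image_of_mem (fun ξ => ∫ θ, Z θ * ξ θ ∂μ) hopt, ?_⟩).symm⟩
  rintro _ ⟨ξ, hξ, rfl⟩
  exact integral_mul_le_of_sub_mul_le v (integrable_of_mem_cvarEnvelope hξ)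
    (integrable_of_mem_cvarEnvelope hopt) (integrable_mul_of_mem_cvarEnvelope hZm hZb hξ)
    (integrable_mul_of_mem_cvarEnvelope hZm hZb hopt) (hξ.2.1.trans hopt.2.1.symm)
    (hξ.2.2.mono fun θ hθ => sub_mul_le_sub_mul_ite hθ.1 hθ.2)
end

section
/- Let W ⊆ ℝ^d and Λ ⊆ ℝ^m, let λ : W → Λ and F : Λ → ℝ be such that: F is convex on Λ; λ is a locally Lipschitz-invertible parameterization in the sense that around every α ∈ W there are neighborhoods on which λ is a bijection with ℓ-Lipschitz inverse and L_λ-Lipschitz-smooth forward map; for a fixed optimizer α* and every α ∈ W and all sufficiently small ε > 0, the convex combination (1−ε)λ(α) + ελ(α*) lies in the local image neighborhood of λ(α); and F ∘ λ is differentiable at ᾱ with gradient ∇(F∘λ)(ᾱ) = Dλ(ᾱ)^T w̄ for some subgradient w̄ ∈ ∂F(λ(ᾱ)). Then F(λ(ᾱ)) − F(λ(α*)) ≤ ℓ · ‖∇(F∘λ)(ᾱ)‖ · ‖λ(α*) − λ(ᾱ)‖; in particular if the image λ(W) has diameter D_λ, then F(λ(ᾱ)) − min_{α ∈ W} F(λ(α))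 ≤ ℓ D_λ ‖∇(F∘λ)(ᾱ)‖ for every ᾱ ∈ W. -/
open scoped InnerProductSpace

set_option maxHeartbeats 1000000

/-- Hidden convexity. Suppose `F` is convex on `Λ ⊇ λ(W)`, `λ` is
locally Lipschitz-invertible (local bijection `U α ↔ V α` with `ℓ`-Lipschitz
inverse `ψ α` and `L_λ`-smooth forward map), small convex combinations toward
`λ(α*)` stay in the local image neighborhood, and `F ∘ λ` has gradient
`Dlam(abar)ᵀ wbar` at `abar` for a subgradient `wbar ∈ ∂F(λ(abar))`. Then
`F(λ abar) − F(λ α*) ≤ ℓ‖∇(F∘λ)(abar)‖‖λ α* − λ abar‖`; in particular, with image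
diameter `D_λ` and `α*` a minimizer, `F(λ abar) − min ≤ ℓ D_λ ‖∇(F∘λ)(abar)‖`. -/
theorem hidden_convexity {d m : ℕ}
    (W : Set (EuclideanSpace ℝ (Fin d))) (Λ : Set (EuclideanSpace ℝ (Fin m)))
    (lam : EuclideanSpace ℝ (Fin d) → EuclideanSpace ℝ (Fin m))
    (F : EuclideanSpace ℝ (Fin m) → ℝ)
    (ℓ Llam Dlam : ℝ) (hℓ : 0 < ℓ) (hLlam : 0 < Llam) (hDlam : 0 < Dlam)
    (hWΛ : lam '' W ⊆ Λ) (hΛconv : Convex ℝ Λ)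
    (hF : ConvexOn ℝ Λ F)
    (hlamdiff : ∀ α ∈ W, DifferentiableAt ℝ lam α)
    -- local neighborhoods and local inverse
    (U : EuclideanSpace ℝ (Fin d) → Set (EuclideanSpace ℝ (Fin d)))
    (V : EuclideanSpace ℝ (Fin d) → Set (EuclideanSpace ℝ (Fin m)))
    (ψ : EuclideanSpace ℝ (Fin d) → EuclideanSpace ℝ (Fin m) →
        EuclideanSpace ℝ (Fin d))
    (hU : ∀ α ∈ W, α ∈ U α ∧ U α ⊆ W)
    (hV : ∀ α ∈ W, V α ⊆ Λ)
    (hbij : ∀ α ∈ W, Set.BijOn lam (U α) (V α))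
    (hinv : ∀ α ∈ W, ∀ β ∈ U α, ψ α (lam β) = β)
    (hψlip : ∀ α ∈ W, ∀ x ∈ V α, ∀ y ∈ V α, ‖ψ α x - ψ α y‖ ≤ ℓ * ‖x - y‖)
    (hsmooth : ∀ α ∈ W, ∀ β ∈ U α, ∀ γ ∈ U α,
      ‖lam γ - lam β - fderiv ℝ lam β (γ - β)‖ ≤ (Llam / 2) * ‖γ - β‖ ^ 2)
    -- the fixed optimizer and the segment condition
    (αstar : EuclideanSpace ℝ (Fin d)) (hαstar : αstar ∈ W)
    (hseg : ∀ α ∈ W, ∃ εbar > (0 : ℝ), ∀ ε ∈ Set.Ioc (0 : ℝ) εbar,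
      (1 - ε) • lam α + ε • lam αstar ∈ V α)
    -- point of interest, subgradient and gradient identity
    (abar : EuclideanSpace ℝ (Fin d)) (habar : abar ∈ W)
    (wbar : EuclideanSpace ℝ (Fin m))
    (hsub : ∀ y ∈ Λ, F (lam abar) + ⟪wbar, y - lam abar⟫_ℝ ≤ F y)
    (hFlamdiff : DifferentiableAt ℝ (F ∘ lam) abar)
    (hgrad : gradient (F ∘ lam) abar
        = ContinuousLinearMap.adjoint (fderiv ℝ lam abar) wbar)
    -- data for the "in particular" part
    (hdiam : ∀ α ∈ W, ∀ β ∈ W, ‖lam α - lam β‖ ≤ Dlam)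
    (hmin : ∀ α ∈ W, F (lam αstar) ≤ F (lam α)) :
    F (lam abar) - F (lam αstar)
        ≤ ℓ * ‖gradient (F ∘ lam) abar‖ * ‖lam αstar - lam abar‖ ∧
    F (lam abar) - F (lam αstar) ≤ ℓ * Dlam * ‖gradient (F ∘ lam) abar‖ := by

  have hΛstar : lam αstar ∈ Λ := hWΛ ⟨αstar, hαstar, rfl⟩
  set g := gradient (F ∘ lam) abar with hg
  set Δ := lam αstar - lam abar with hΔ
  set A := fderiv ℝ lam abar with hA
  have key : -(⟪wbar, Δ⟫_ℝ) ≤ ℓ * ‖g‖ * ‖Δ‖ := by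
    refine le_of_forall_pos_le_add fun δ hδ => ?_
    obtain ⟨εb, hεb, hsegb⟩ := hseg abar habar
    set C := ‖wbar‖ * ((Llam / 2) * (ℓ ^ 2 * ‖Δ‖ ^ 2)) with hC
    have hC0 : 0 ≤ C := by positivity
    set ε := min εb (δ / (C + 1)) with hε
    have hε0 : 0 < ε := lt_min hεb (by positivity)
    have hεC : ε * C ≤ δ := by
      have h1 : ε ≤ δ / (C + 1) := min_le_right _ _
      have h2 : ε * C ≤ (δ / (C + 1)) * C :=
        mul_le_mul_of_nonneg_right h1 hC0
      have h3 : (δ / (C + 1)) * C ≤ δ := by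
        rw [div_mul_eq_mul_div, div_le_iff₀ (by linarith)]
        nlinarith
      linarith
    have hy : (1 - ε) • lam abar + ε • lam αstar ∈ V abar :=
      hsegb ε ⟨hε0, min_le_left _ _⟩
    set y := (1 - ε) • lam abar + ε • lam αstar with hy'
    have hydiff : y - lam abar = ε • Δ := by
      rw [hy', hΔ, smul_sub, sub_smul, one_smul]
      abel
    obtain ⟨β, hβU, hβeq⟩ := (hbij abar habar).surjOn hy
    have habarU : abar ∈ U abar := (hU abar habar).1
    have hlamabarV : lam abar ∈ V abar := (hbij abar habar).mapsTo habarU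
    have hβnorm : ‖β - abar‖ ≤ ℓ * (ε * ‖Δ‖) := by
      have hlip := hψlip abar habar y hy (lam abar) hlamabarV
      rw [hinv abar habar abar habarU] at hlip
      have hψy : ψ abar y = β := by rw [← hβeq, hinv abar habar β hβU]
      rw [hψy, hydiff, norm_smul, Real.norm_eq_abs, abs_of_pos hε0] at hlip
      linarith [hlip]
    have hsm := hsmooth abar habar abar habarU β hβU
    rw [hβeq, hydiff] at hsm
    -- r = ε • Δ - A (β - abar)
    set r := ε • Δ - A (β - abar) with hr
    have hrnorm : ‖r‖ ≤ (Llam / 2) * (ℓ * (ε * ‖Δ‖)) ^ 2 := by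
      refine le_trans hsm (mul_le_mul_of_nonneg_left ?_ (by positivity))
      exact pow_le_pow_left₀ (norm_nonneg _) hβnorm 2
    have hinner1 : ⟪g, β - abar⟫_ℝ = ⟪wbar, A (β - abar)⟫_ℝ := by
      rw [hgrad, ContinuousLinearMap.adjoint_inner_left]
    have hinner2 : ε * ⟪wbar, Δ⟫_ℝ = ⟪wbar, A (β - abar)⟫_ℝ + ⟪wbar, r⟫_ℝ := by
      rw [← inner_add_right, hr]
      have : A (β - abar) + (ε • Δ - A (β - abar)) = ε • Δ := by abel
      rw [this, real_inner_smul_right]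
    have hb1 : -(‖g‖ * ‖β - abar‖) ≤ ⟪g, β - abar⟫_ℝ := by
      have := abs_real_inner_le_norm g (β - abar)
      linarith [neg_abs_le (⟪g, β - abar⟫_ℝ)]
    have hb2 : -(‖wbar‖ * ‖r‖) ≤ ⟪wbar, r⟫_ℝ := by
      have := abs_real_inner_le_norm wbar r
      linarith [neg_abs_le (⟪wbar, r⟫_ℝ)]
    have hgn : (0 : ℝ) ≤ ‖g‖ := norm_nonneg _
    have hwn : (0 : ℝ) ≤ ‖wbar‖ := norm_nonneg _
    have hkey : ε * ⟪wbar, Δ⟫_ℝ ≥ -(ε * (ℓ * ‖g‖ * ‖Δ‖)) - ε * (ε * C) := by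
      have hgb : -(‖g‖ * (ℓ * (ε * ‖Δ‖))) ≤ ⟪g, β - abar⟫_ℝ := by
        refine le_trans ?_ hb1
        have : ‖g‖ * ‖β - abar‖ ≤ ‖g‖ * (ℓ * (ε * ‖Δ‖)) :=
          mul_le_mul_of_nonneg_left hβnorm hgn
        linarith
      have hrb : -(‖wbar‖ * ((Llam / 2) * (ℓ * (ε * ‖Δ‖)) ^ 2)) ≤ ⟪wbar, r⟫_ℝ := by
        refine le_trans ?_ hb2
        have : ‖wbar‖ * ‖r‖ ≤ ‖wbar‖ * ((Llam / 2) * (ℓ * (ε * ‖Δ‖)) ^ 2) :=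
          mul_le_mul_of_nonneg_left hrnorm hwn
        linarith
      rw [hinner2]
      rw [hC] at *
      nlinarith [hinner1]
    have : -⟪wbar, Δ⟫_ℝ ≤ ℓ * ‖g‖ * ‖Δ‖ + ε * C := by
      have := mul_le_mul_of_nonneg_left (le_of_eq (rfl : ε = ε)) hε0.le
      nlinarith [hkey, hε0]
    linarith [hεC]
  have hsub' := hsub (lam αstar) hΛstar
  have hmain : F (lam abar) - F (lam αstar) ≤ ℓ * ‖g‖ * ‖Δ‖ := by
    have : F (lam abar) - F (lam αstar) ≤ -⟪wbar, Δ⟫_ℝ := by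
      rw [hΔ]; linarith [hsub']
    linarith [key]
  refine ⟨hmain, ?_⟩
  have hd : ‖Δ‖ ≤ Dlam := by rw [hΔ]; exact hdiam αstar hαstar abar habar
  have : ℓ * ‖g‖ * ‖Δ‖ ≤ ℓ * Dlam * ‖g‖ := by
    nlinarith [mul_nonneg (mul_nonneg hℓ.le (norm_nonneg g)) (sub_nonneg.2 hd)]
  linarith
end
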